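/- arXiv:2404.18855 — 4 statements merged into one kernel-verified Lean document; each statement's English description precedes it below -/
import Mathlib

section
/- Let F be a finite replacement-invariant subset of [0,1]. If F is uncountable, then F is dense in [0,1]. In particular, if F has non-zero Hausdorff dimension, then F is dense in [0,1]. -/
open Filter Set Topology MeasureTheory
open scoped ENNReal NNReal

/-- The Pierce expansion map `T`. -/
noncomputable def pierceT (x : ℝ) : ℝ := if x = 0 then 0 else 1 - (⌊1 / x⌋₊ : ℝ) * x

/-- The first Pierce digit `d₁(x)`, with `d₁(0) = ∞`. -/
noncomputable def pierceD1 (x : ℝ) : ℕ∞ := if x = 0 then ⊤ else ((⌊1 / x⌋₊ : ℕ) : ℕ∞)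

/-- The `k`-th Pierce expansion digit `d_k(x)` (for `k ≥ 1`). -/
noncomputable def pierceDigit (k : ℕ) (x : ℝ) : ℕ∞ := pierceD1 (pierceT^[k - 1] x)

/-- Extended logarithm on `ℕ∞`, with the convention `log ∞ = ∞`. -/
noncomputable def enlog (m : ℕ∞) : ℝ≥0∞ :=
  if m = ⊤ then ⊤ else ENNReal.ofReal (Real.log ((WithTop.untopD 0 m : ℕ) : ℝ))

/-- `A(α) = {x ∈ [0,1] : lim (log d_n(x))/n = α}`. -/
noncomputable def pierceA (α : ℝ≥0∞) : Set ℝ :=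
  {x ∈ Icc (0 : ℝ) 1 |
    Tendsto (fun n : ℕ => enlog (pierceDigit n x) / (n : ℝ≥0∞)) atTop (𝓝 α)}

/-- The number of leap years up to year `N` with intercalation sequence `σ`:
`L(σ, N) = Σ_{k ≥ 1} (-1)^{k+1} ⌊N/(σ₁⋯σ_k)⌋`, with `⌊N/∞⌋ = 0`. -/
noncomputable def leapL (σ : ℕ → ℕ∞) (N : ℕ) : ℝ :=
  ∑' k : ℕ, (-1 : ℝ) ^ k *
    ((N / WithTop.untopD 0 (∏ i ∈ Finset.Icc 1 (k + 1), σ i) : ℕ) : ℝ)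

/-- The quotient `(Nx - L((d_k(x))_k, N))/√(log N)`. -/
noncomputable def leapQ (x : ℝ) (N : ℕ) : ℝ :=
  ((N : ℝ) * x - leapL (fun k => pierceDigit k x) N) / Real.sqrt (Real.log N)

/-- `S(α)`: the set of `x ∈ [0,1]` whose leap-year quotient has limsup `1/√(2α)`
and liminf `-1/√(2α)`. -/
noncomputable def pierceS (α : ℝ≥0∞) : Set ℝ :=
  {x ∈ Icc (0 : ℝ) 1 |
    Filter.limsup (fun N : ℕ => ((leapQ x N : ℝ) : EReal)) atTop
      = (((2 * α) ^ (-(1 / 2) : ℝ) : ℝ≥0∞) : EReal) ∧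
    Filter.liminf (fun N : ℕ => ((leapQ x N : ℝ) : EReal)) atTop
      = -(((2 * α) ^ (-(1 / 2) : ℝ) : ℝ≥0∞) : EReal)}

/-- The fundamental interval `I_σ` associated with the finite sequence `σ 1, …, σ n`. -/
def fundI (n : ℕ) (σ : ℕ → ℕ) : Set ℝ :=
  {x ∈ Icc (0 : ℝ) 1 | ∀ k, 1 ≤ k → k ≤ n → pierceDigit k x = ((σ k : ℕ) : ℕ∞)}

/-!
If `F` contains a point with a finite Pierce expansion, it contains all of them, since they all
end in `∞, ∞, …`; among them are all rationals of `[0,1]`. Otherwise, since the points with an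
infinite expansion and bounded excess `d_n - n` form a countable set (the excess is
non-decreasing, hence eventually constant, and the digits determine the point), `F` contains a
point `x` of unbounded excess. Far out in the expansion of `x` the digits are then large enough
to be preceded by the digits of any finite expansion `r` followed by a run of consecutive large
digits; the resulting points of `F` share the tail of `x` and approach `r`.
-/

namespace Pierce

open scoped Nat

/-- The branch of `pierceT⁻¹` on the cylinder `(1/(a+1), 1/a]` of points with first digit `a`. -/
noncomputable def invBranch (a : ℕ) (w : ℝ) : ℝ := (1 - w) / a

/-- `d_{n+1}(x)` as a natural number, as long as the orbit of `x` has not reached `0`. -/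
noncomputable def natDigit (n : ℕ) (x : ℝ) : ℕ := ⌊1 / pierceT^[n] x⌋₊

def Terminates (x : ℝ) : Prop := ∃ m, pierceT^[m] x = 0

section Step

variable {z : ℝ}

lemma one_le_floor_one_div (h0 : 0 < z) (h1 : z ≤ 1) : 1 ≤ ⌊1 / z⌋₊ :=
  Nat.le_floor (by push_cast; exact one_le_one_div h0 h1)

lemma pierceT_of_ne_zero (h : z ≠ 0) : pierceT z = 1 - ⌊1 / z⌋₊ * z := if_neg h

lemma pierceT_nonneg_of_pos (h0 : 0 < z) : 0 ≤ pierceT z := by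
  have : (⌊1 / z⌋₊ : ℝ) * z ≤ 1 :=
    (le_div_iff₀ h0).1 (Nat.floor_le (by positivity))
  rw [pierceT_of_ne_zero h0.ne']
  linarith

lemma pierceT_lt_of_pos (h0 : 0 < z) (h1 : z ≤ 1) : pierceT z < 1 / (⌊1 / z⌋₊ + 1) := by
  have hz : 1 < ((⌊1 / z⌋₊ : ℝ) + 1) * z := (div_lt_iff₀ h0).1 (Nat.lt_floor_add_one _)
  have hd : (1 : ℝ) ≤ ⌊1 / z⌋₊ := by exact_mod_cast one_le_floor_one_div h0 h1
  rw [pierceT_of_ne_zero h0.ne', lt_div_iff₀ (by positivity)]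
  nlinarith

lemma invBranch_pierceT (h0 : 0 < z) (h1 : z ≤ 1) : invBranch ⌊1 / z⌋₊ (pierceT z) = z := by
  have : (⌊1 / z⌋₊ : ℝ) ≠ 0 := by
    exact_mod_cast Nat.one_le_iff_ne_zero.1 (one_le_floor_one_div h0 h1)
  rw [invBranch, pierceT_of_ne_zero h0.ne']
  field_simp
  ring

lemma pierceT_mapsTo : MapsTo pierceT (Icc 0 1) (Icc 0 1) := by
  intro z ⟨h0, h1⟩
  rcases h0.eq_or_lt with rfl | h0
  · simp [pierceT]
  refine ⟨pierceT_nonneg_of_pos h0, (pierceT_lt_of_pos h0 h1).le.trans ?_⟩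
  exact div_le_one_of_le₀ (by linarith [(⌊1 / z⌋₊).cast_nonneg (α := ℝ)]) (by positivity)

lemma floor_one_div_lt_floor_one_div_pierceT (h0 : 0 < z) (h1 : z ≤ 1) (hT : pierceT z ≠ 0) :
    ⌊1 / z⌋₊ < ⌊1 / pierceT z⌋₊ := by
  have hT0 : 0 < pierceT z := (pierceT_nonneg_of_pos h0).lt_of_ne' hT
  have := (lt_one_div hT0 (by positivity)).1 (pierceT_lt_of_pos h0 h1)
  exact Nat.lt_of_lt_of_le (Nat.lt_succ_self _) (Nat.le_floor (by push_cast; exact this.le))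

lemma lt_one_div_of_lt_floor_one_div {a : ℕ} (h0 : 0 < z) (ha : 0 < a) (h : a < ⌊1 / z⌋₊) :
    z < 1 / a := by
  have : (a : ℝ) < 1 / z := (Nat.cast_lt.2 h).trans_le (Nat.floor_le (by positivity))
  exact (lt_one_div (by positivity) h0).1 this

lemma pierceT_sub_pierceT {y : ℝ} (hz : z ≠ 0) (hy : y ≠ 0) (h : ⌊1 / z⌋₊ = ⌊1 / y⌋₊) :
    pierceT z - pierceT y = ⌊1 / z⌋₊ * (y - z) := by
  rw [pierceT_of_ne_zero hz, pierceT_of_ne_zero hy, h]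
  ring

end Step

section InvBranch

variable {a : ℕ} {w : ℝ}

lemma invBranch_mem_Ioc (ha : 1 ≤ a) (hw0 : 0 ≤ w) (hw : w < 1 / (a + 1)) :
    invBranch a w ∈ Ioc (1 / (a + 1) : ℝ) (1 / a) := by
  have ha0 : (0 : ℝ) < a := by exact_mod_cast ha
  have : w * (a + 1) < 1 := (lt_div_iff₀ (by positivity)).1 hw
  constructor
  · rw [invBranch, div_lt_div_iff₀ (by positivity) ha0]; nlinarith
  · exact div_le_div_of_nonneg_right (by linarith) ha0.le

lemma pierceT_invBranch (ha : 1 ≤ a) (hw0 : 0 ≤ w) (hw : w < 1 / (a + 1)) :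
    pierceT (invBranch a w) = w := by
  obtain ⟨hlo, hhi⟩ := invBranch_mem_Ioc ha hw0 hw
  have ha0 : (0 : ℝ) < a := by exact_mod_cast ha
  have hy0 : 0 < invBranch a w := lt_trans (by positivity) hlo
  have hfloor : ⌊1 / invBranch a w⌋₊ = a := by
    rw [Nat.floor_eq_iff (by positivity)]
    exact ⟨(le_one_div ha0 hy0).2 hhi, (one_div_lt hy0 (by positivity)).2 hlo⟩
  rw [pierceT_of_ne_zero hy0.ne', hfloor, invBranch]
  field_simp
  ring

lemma abs_invBranch_sub_invBranch_le (ha : 1 ≤ a) (v : ℝ) :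
    |invBranch a v - invBranch a w| ≤ |v - w| := by
  have ha1 : (1 : ℝ) ≤ a := by exact_mod_cast ha
  have : invBranch a v - invBranch a w = (w - v) / a := by
    simp only [invBranch]; ring
  rw [this, abs_div, Nat.abs_cast, abs_sub_comm]
  exact div_le_self (abs_nonneg _) ha1

end InvBranch

section Orbit

variable {x : ℝ}

lemma iterate_mem_Icc (hx : x ∈ Icc 0 1) (n : ℕ) : pierceT^[n] x ∈ Icc 0 1 :=
  pierceT_mapsTo.iterate n hx

lemma iterate_pos (hx : x ∈ Icc 0 1) (hT : ∀ n, pierceT^[n] x ≠ 0) (n : ℕ) :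
    0 < pierceT^[n] x :=
  (iterate_mem_Icc hx n).1.lt_of_ne' (hT n)

lemma natDigit_lt_natDigit_succ (hx : x ∈ Icc 0 1) (hT : ∀ n, pierceT^[n] x ≠ 0) (n : ℕ) :
    natDigit n x < natDigit (n + 1) x := by
  have hTn := hT (n + 1)
  rw [Function.iterate_succ_apply'] at hTn
  rw [natDigit, natDigit, Function.iterate_succ_apply']
  exact floor_one_div_lt_floor_one_div_pierceT (iterate_pos hx hT n) (iterate_mem_Icc hx n).2 hTn

lemma succ_le_natDigit (hx : x ∈ Icc 0 1) (hT : ∀ n, pierceT^[n] x ≠ 0) (n : ℕ) :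
    n + 1 ≤ natDigit n x := by
  induction n with
  | zero => exact one_le_floor_one_div (iterate_pos hx hT 0) (iterate_mem_Icc hx 0).2
  | succ n ih => exact ih.trans_lt (natDigit_lt_natDigit_succ hx hT n)

lemma monotone_natDigit_sub (hx : x ∈ Icc 0 1) (hT : ∀ n, pierceT^[n] x ≠ 0) :
    Monotone fun n => natDigit n x - n :=
  monotone_nat_of_le_succ fun n => by
    have := natDigit_lt_natDigit_succ hx hT n
    omega

/-- Equal digits make `pierceT` expand the distance by the common digit, and the `n`-th digit is
at least `n + 1`. -/
lemma factorial_mul_abs_sub_le {y : ℝ} (hx : x ∈ Icc 0 1) (hxT : ∀ n, pierceT^[n] x ≠ 0)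
    (hyT : ∀ n, pierceT^[n] y ≠ 0) (h : ∀ n, natDigit n x = natDigit n y) (n : ℕ) :
    (n ! : ℝ) * |x - y| ≤ |pierceT^[n] x - pierceT^[n] y| := by
  induction n with
  | zero => simp
  | succ n ih =>
    have hd : ((n + 1 : ℕ) : ℝ) ≤ natDigit n x := by exact_mod_cast succ_le_natDigit hx hxT n
    rw [Function.iterate_succ_apply', Function.iterate_succ_apply',
      pierceT_sub_pierceT (hxT n) (hyT n) (h n), abs_mul, Nat.abs_cast,
      abs_sub_comm (pierceT^[n] y), Nat.factorial_succ, Nat.cast_mul, mul_assoc]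
    exact mul_le_mul hd ih (by positivity) (by positivity)

lemma eq_of_natDigit_eq {y : ℝ} (hx : x ∈ Icc 0 1) (hy : y ∈ Icc 0 1)
    (hxT : ∀ n, pierceT^[n] x ≠ 0) (hyT : ∀ n, pierceT^[n] y ≠ 0)
    (h : ∀ n, natDigit n x = natDigit n y) : x = y := by
  by_contra hne
  have hpos : 0 < |x - y| := abs_pos.2 (sub_ne_zero.2 hne)
  obtain ⟨n, hn⟩ := exists_nat_gt (1 / |x - y|)
  have hbound : |pierceT^[n] x - pierceT^[n] y| ≤ 1 :=
    abs_sub_le_iff.2 ⟨by linarith [(iterate_mem_Icc hx n).2, (iterate_mem_Icc hy n).1],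
      by linarith [(iterate_mem_Icc hx n).1, (iterate_mem_Icc hy n).2]⟩
  have hfac : (n : ℝ) ≤ n ! := by exact_mod_cast Nat.self_le_factorial n
  have := (factorial_mul_abs_sub_le hx hxT hyT h n).trans hbound
  rw [div_lt_iff₀ hpos] at hn
  nlinarith

end Orbit

lemma _root_.Monotone.eventuallyConst_of_bddAbove {α : Type*} [SemilatticeSup α] [Nonempty α]
    {f : α → ℕ} (hf : Monotone f) (hb : BddAbove (range f)) : EventuallyConst f atTop := by
  obtain ⟨N, hN⟩ := Nat.sSup_mem (range_nonempty f) hb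
  refine eventuallyConst_atTop.2 ⟨N, fun n hn => le_antisymm ?_ (hf hn)⟩
  exact hN ▸ le_csSup hb (mem_range_self n)

lemma countable_setOf_eventuallyConst {β : Type*} [Countable β] :
    {f : ℕ → β | EventuallyConst f atTop}.Countable := by
  have hsub : {f : ℕ → β | EventuallyConst f atTop} ⊆
      ⋃ N : ℕ, range fun g : Fin (N + 1) → β => fun n => g ⟨min n N, by omega⟩ := by
    intro f hf
    obtain ⟨N, hN⟩ := eventuallyConst_atTop.1 hf
    refine mem_iUnion.2 ⟨N, fun i => f i, funext fun n => ?_⟩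
    rcases le_total n N with h | h
    · simp [min_eq_left h]
    · simp [min_eq_right h, hN n h]
  exact (countable_iUnion fun N => countable_range _).mono hsub

lemma countable_setOf_bddAbove_natDigit_sub :
    {x ∈ Icc (0 : ℝ) 1 | (∀ n, pierceT^[n] x ≠ 0) ∧
      BddAbove (range fun n => natDigit n x - n)}.Countable := by
  refine MapsTo.countable_of_injOn (f := fun x n => natDigit n x - n)
    (fun x hx => (monotone_natDigit_sub hx.1 hx.2.1).eventuallyConst_of_bddAbove hx.2.2)
    (fun x hx y hy hxy => eq_of_natDigit_eq hx.1 hy.1 hx.2.1 hy.2.1 fun n => ?_)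
    countable_setOf_eventuallyConst
  have hn := congrFun hxy n
  have := succ_le_natDigit hx.1 hx.2.1 n
  have := succ_le_natDigit hy.1 hy.2.1 n
  simp only at hn
  omega

lemma pierceT_natCast_div {p q : ℕ} (hp : 0 < p) (hq : 0 < q) :
    pierceT ((p : ℝ) / q) = (q % p : ℕ) / q := by
  have hpq : (0 : ℝ) < p / q := by positivity
  have hdiv : ((q / p : ℕ) : ℝ) * p + (q % p : ℕ) = q := by
    exact_mod_cast Nat.div_add_mod' q p
  rw [pierceT_of_ne_zero hpq.ne', one_div_div, Nat.floor_div_natCast, Nat.floor_natCast]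
  field_simp
  linarith

lemma terminates_natCast_div (q p : ℕ) : Terminates ((p : ℝ) / q) := by
  induction p using Nat.strong_induction_on with
  | _ p ih =>
    rcases Nat.eq_zero_or_pos p with rfl | hp
    · exact ⟨0, by simp⟩
    rcases Nat.eq_zero_or_pos q with rfl | hq
    · exact ⟨0, by simp⟩
    obtain ⟨m, hm⟩ := ih (q % p) (Nat.mod_lt q hp)
    exact ⟨m + 1, by rw [Function.iterate_succ_apply, pierceT_natCast_div hp hq, hm]⟩

lemma Icc_subset_closure_terminates :
    Icc (0 : ℝ) 1 ⊆ closure {r ∈ Icc (0 : ℝ) 1 | Terminates r} := by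
  intro u hu
  have hlim : Tendsto (fun N : ℕ => (⌊u * N⌋₊ : ℝ) / N) atTop (𝓝 u) :=
    (tendsto_nat_floor_mul_div_atTop hu.1).comp tendsto_natCast_atTop_atTop
  refine mem_closure_of_tendsto hlim (eventually_atTop.2 ⟨1, fun N hN => ?_⟩)
  have hN : (0 : ℝ) < N := by exact_mod_cast hN
  have hfloor : (⌊u * N⌋₊ : ℝ) ≤ N :=
    (Nat.floor_le (mul_nonneg hu.1 hN.le)).trans (by nlinarith [hu.2])
  exact ⟨⟨by positivity, div_le_one_of_le₀ hfloor hN.le⟩, terminates_natCast_div N _⟩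

section Construction

/-- Prepending the digits `A, A + 1, …, A + n - 1` to a small `z`. -/
lemma exists_iterate_eq_of_add_lt_floor (n : ℕ) :
    ∀ {A : ℕ}, 1 ≤ A → ∀ {z : ℝ}, 0 < z → A + n < ⌊1 / z⌋₊ →
      ∃ y : ℝ, 0 < y ∧ y < 1 / A ∧ pierceT^[n] y = z := by
  induction n with
  | zero => intro A hA z hz hzA; exact ⟨z, hz, lt_one_div_of_lt_floor_one_div hz hA hzA, rfl⟩
  | succ n ih =>
    intro A hA z hz hzA
    obtain ⟨y, hy0, hyA, hyz⟩ := ih (A := A + 1) (by omega) hz (by omega)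
    have hyA' : y < 1 / ((A : ℝ) + 1) := by exact_mod_cast hyA
    have hA0 : (0 : ℝ) < A := by exact_mod_cast hA
    refine ⟨invBranch A y, lt_trans (by positivity) (invBranch_mem_Ioc hA hy0.le hyA').1,
      div_lt_div_of_pos_right (by linarith) hA0, ?_⟩
    rw [Function.iterate_succ_apply, pierceT_invBranch hA hy0.le hyA', hyz]

lemma exists_iterate_eq_near_zero {ε : ℝ} (hε : 0 < ε) :
    ∃ A : ℕ, ∀ (m : ℕ) (z : ℝ), 0 < z → A + m < ⌊1 / z⌋₊ →
      ∃ y ∈ Icc (0 : ℝ) 1, pierceT^[m] y = z ∧ |y| < ε := by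
  obtain ⟨A, hA⟩ := exists_nat_gt (1 / ε)
  have hA0 : (0 : ℝ) < A := lt_trans (by positivity) hA
  have hA1 : 1 ≤ A := by exact_mod_cast hA0
  refine ⟨A, fun m z hz hzA => ?_⟩
  obtain ⟨y, hy0, hyA, hyz⟩ := exists_iterate_eq_of_add_lt_floor m hA1 hz hzA
  have hAε : 1 / (A : ℝ) < ε := (one_div_lt hε hA0).1 hA
  have hA1' : 1 / (A : ℝ) ≤ 1 := div_le_one_of_le₀ (by exact_mod_cast hA1) hA0.le
  exact ⟨y, ⟨hy0.le, by linarith⟩, hyz, by rw [abs_of_pos hy0]; linarith⟩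

/-- Prepend the digits of `r` to the witness of `exists_iterate_eq_near_zero`. -/
lemma exists_iterate_eq_near_of_iterate_eq_zero (j : ℕ) :
    ∀ {r : ℝ}, r ∈ Icc (0 : ℝ) 1 → pierceT^[j] r = 0 → ∀ {ε : ℝ}, 0 < ε →
      ∃ A : ℕ, ∀ m, j ≤ m → ∀ z : ℝ, 0 < z → A + m < ⌊1 / z⌋₊ →
        ∃ y ∈ Icc (0 : ℝ) 1, pierceT^[m] y = z ∧ |y - r| < ε := by
  induction j with
  | zero =>
    intro r _ hr ε hε
    obtain ⟨A, hA⟩ := exists_iterate_eq_near_zero hε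
    exact ⟨A, fun m _ z hz hzA => by simpa [show r = 0 from hr] using hA m z hz hzA⟩
  | succ j ih =>
    intro r hr hrj ε hε
    rcases hr.1.eq_or_lt with rfl | hr0
    · obtain ⟨A, hA⟩ := exists_iterate_eq_near_zero hε
      exact ⟨A, fun m _ z hz hzA => by simpa using hA m z hz hzA⟩
    set d := ⌊1 / r⌋₊
    have hd : 1 ≤ d := one_le_floor_one_div hr0 hr.2
    have hw0 : 0 ≤ pierceT r := pierceT_nonneg_of_pos hr0
    have hwd : pierceT r < 1 / (d + 1) := pierceT_lt_of_pos hr0 hr.2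
    obtain ⟨A, hA⟩ := ih (pierceT_mapsTo hr) (by rwa [← Function.iterate_succ_apply])
      (ε := min ε (1 / (d + 1) - pierceT r)) (lt_min hε (by linarith))
    refine ⟨A, fun m hm z hz hzA => ?_⟩
    obtain ⟨m, rfl⟩ : ∃ m', m = m' + 1 := ⟨m - 1, by omega⟩
    obtain ⟨y, hy, hyz, hyr⟩ := hA m (by omega) z hz (by omega)
    have hyd : y < 1 / (d + 1) := by
      linarith [abs_lt.1 hyr, min_le_right ε (1 / (d + 1) - pierceT r)]
    obtain ⟨hlo, hhi⟩ := invBranch_mem_Ioc hd hy.1 hyd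
    have hd1 : 1 / (d : ℝ) ≤ 1 := div_le_one_of_le₀ (by exact_mod_cast hd) (by positivity)
    refine ⟨invBranch d y, ⟨lt_trans (by positivity) hlo |>.le, hhi.trans hd1⟩, ?_, ?_⟩
    · rw [Function.iterate_succ_apply, pierceT_invBranch hd hy.1 hyd, hyz]
    · calc |invBranch d y - r| = |invBranch d y - invBranch d (pierceT r)| := by
            rw [invBranch_pierceT hr0 hr.2]
        _ ≤ |y - pierceT r| := abs_invBranch_sub_invBranch_le hd y
        _ < ε := hyr.trans_le (min_le_left _ _)

end Construction

def tailClass (x : ℝ) : Set ℝ := {y ∈ Icc (0 : ℝ) 1 | ∃ n, pierceT^[n] y = pierceT^[n] x}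

lemma pierceDigit_eq_of_iterate_eq {x y : ℝ} {n k : ℕ} (h : pierceT^[n] y = pierceT^[n] x)
    (hk : n < k) : pierceDigit k y = pierceDigit k x := by
  rw [pierceDigit, pierceDigit, show k - 1 = k - 1 - n + n by omega, Function.iterate_add_apply,
    Function.iterate_add_apply, h]

lemma iterate_add_eq_zero {x : ℝ} {m : ℕ} (h : pierceT^[m] x = 0) (k : ℕ) :
    pierceT^[k + m] x = 0 := by
  rw [Function.iterate_add_apply, h, Function.iterate_fixed (by simp [pierceT]) k]

lemma setOf_terminates_subset_tailClass {x : ℝ} (hx : Terminates x) :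
    {r ∈ Icc (0 : ℝ) 1 | Terminates r} ⊆ tailClass x := by
  obtain ⟨m, hm⟩ := hx
  rintro r ⟨hr, j, hj⟩
  exact ⟨hr, m + j, by rw [iterate_add_eq_zero hj, add_comm, iterate_add_eq_zero hm]⟩

lemma setOf_terminates_subset_closure_tailClass {x : ℝ} (hx : x ∈ Icc 0 1)
    (hT : ∀ n, pierceT^[n] x ≠ 0) (hunb : ¬BddAbove (range fun n => natDigit n x - n)) :
    {r ∈ Icc (0 : ℝ) 1 | Terminates r} ⊆ closure (tailClass x) := by
  rintro r ⟨hr, j, hj⟩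
  refine Metric.mem_closure_iff.2 fun ε hε => ?_
  obtain ⟨A, hA⟩ := exists_iterate_eq_near_of_iterate_eq_zero j hr hj hε
  obtain ⟨_, ⟨m₀, rfl⟩, hm₀⟩ := not_bddAbove_iff.1 hunb A
  have hm := monotone_natDigit_sub hx hT (le_max_left m₀ j)
  obtain ⟨y, hy, hyx, hyr⟩ := hA (max m₀ j) (le_max_right _ _) _ (iterate_pos hx hT _)
    (show A + max m₀ j < natDigit (max m₀ j) x by simp only at hm hm₀; omega)
  exact ⟨y, ⟨hy, _, hyx⟩, by rwa [dist_comm, Real.dist_eq]⟩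

end Pierce

open Pierce in
theorem stmt0 (F : Set ℝ) (hF : F ⊆ Set.Icc 0 1)
    (hinv : ∀ x ∈ F, ∀ n : ℕ, ∀ y ∈ Set.Icc (0 : ℝ) 1,
      (∀ k, n < k → pierceDigit k y = pierceDigit k x) → y ∈ F) :
    (¬ F.Countable → Set.Icc (0 : ℝ) 1 ⊆ closure F) ∧
    (dimH F ≠ 0 → Set.Icc (0 : ℝ) 1 ⊆ closure F) := by
  have htail : ∀ x ∈ F, tailClass x ⊆ F := fun x hx y ⟨hy, n, hn⟩ =>
    hinv x hx n y hy fun _ hk => pierceDigit_eq_of_iterate_eq hn hk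
  have hdense : ¬F.Countable → Icc (0 : ℝ) 1 ⊆ closure F := by
    intro hunc
    suffices {r ∈ Icc (0 : ℝ) 1 | Terminates r} ⊆ closure F from
      Icc_subset_closure_terminates.trans (closure_minimal this isClosed_closure)
    by_cases hterm : ∃ x ∈ F, Terminates x
    · obtain ⟨x, hxF, hx⟩ := hterm
      exact (setOf_terminates_subset_tailClass hx).trans ((htail x hxF).trans subset_closure)
    · obtain ⟨x, hxF, hx⟩ :=
        not_subset.1 fun h => hunc (countable_setOf_bddAbove_natDigit_sub.mono h)
      have hxT : ∀ n, pierceT^[n] x ≠ 0 := fun n h => hterm ⟨x, hxF, n, h⟩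
      have hunb : ¬BddAbove (range fun n => natDigit n x - n) := fun hb => hx ⟨hF hxF, hxT, hb⟩
      exact (setOf_terminates_subset_closure_tailClass (hF hxF) hxT hunb).trans
        (closure_mono (htail x hxF))
  exact ⟨hdense, fun hdim => hdense fun hc => hdim hc.dimH_zero⟩
end

section
/- Let F be a finite replacement-invariant subset of [0,1]. Then for any non-empty open subset U of [0,1] (with its subspace topology from ℝ), the Hausdorff dimension of U ∩ F equals the Hausdorff dimension of F. -/
open Filter Set Topology MeasureTheory
open scoped ENNReal NNReal

/-!
Irrational points of `(0, 1)` have infinite, strictly increasing Pierce digits, and on the set of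
such points sharing their first `m` digits, `pierceT^[m]` multiplies distances by the product of
these digits; the inverse branches `t ↦ (1 - t) / d` undo it. Choose an irrational `x₀ ∈ U` and `N`
such that every point whose first `N + 1` digits are those of `x₀` lies in `U`. Replacing the first
`m` digits of `x ∈ F` by those of `x₀` followed by consecutive integers yields a valid expansion as
soon as `d_{m+1}(x)` is large enough, and the result lies in `U ∩ F` by invariance; on each cylinder
of depth `m` this replacement is a similarity, so it does not lower the Hausdorff dimension. The
points of `F` for which no `m` works are rational or satisfy `d_j(x) ≤ j + C`; the latter have
eventually consecutive digits, so there are only countably many of them.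
-/

open Function Metric

theorem exists_forall_ge_eq_of_monotone {e : ℕ → ℕ} (he : Monotone e) {C : ℕ}
    (hC : ∀ j, e j ≤ C) : ∃ k, ∀ j ≥ k, e j = e k := by
  obtain ⟨k, hk⟩ := WellFoundedGT.monotone_chain_condition (α := Fin (C + 1))
    ⟨fun j => ⟨e j, Nat.lt_succ_of_le (hC j)⟩, fun _ _ h => he h⟩
  exact ⟨k, fun j hj => (congrArg Fin.val (hk j hj)).symm⟩

theorem dimH_le_dimH_image_of_dist_le_mul {X Y : Type*} [MetricSpace X] [MetricSpace Y]
    {f : X → Y} {s : Set X} (K : ℝ≥0) (h : ∀ x ∈ s, ∀ y ∈ s, dist x y ≤ K * dist (f x) (f y)) :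
    dimH s ≤ dimH (f '' s) := by
  have hf : AntilipschitzWith K (s.domRestrict f) :=
    AntilipschitzWith.of_le_mul_dist fun x y => h x x.2 y y.2
  calc dimH s = dimH (univ : Set s) := by
        rw [← (isometry_subtype_coe (s := s)).dimH_image, image_univ, Subtype.range_coe]
    _ ≤ dimH (s.domRestrict f '' univ) := hf.le_dimH_image univ
    _ = dimH (f '' s) := by rw [image_univ, range_domRestrict]

namespace Pierce

def IrrUnit (x : ℝ) : Prop := Irrational x ∧ x ∈ Ioo 0 1

/-- `digit j x` is the digit `d_{j+1}(x)` (indexed from `0`) as a natural number; when no iterate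
of `x` vanishes, it is the finite value of `pierceDigit (j + 1) x`. -/
noncomputable def digit (j : ℕ) (x : ℝ) : ℕ := ⌊1 / pierceT^[j] x⌋₊

theorem digit_zero_iterate (j : ℕ) (x : ℝ) : digit 0 (pierceT^[j] x) = digit j x := rfl

theorem irrUnit_of_mem_Icc {x : ℝ} (h : Irrational x) (hx : x ∈ Icc 0 1) : IrrUnit x :=
  ⟨h, hx.1.lt_of_ne h.ne_zero.symm, hx.2.lt_of_ne h.ne_one⟩

namespace IrrUnit

variable {x y t : ℝ}

theorem digit_zero_pos (hx : IrrUnit x) : 0 < digit 0 x :=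
  Nat.floor_pos.2 (one_le_one_div hx.2.1 hx.2.2.le)

theorem digit_zero_mul_lt_one (hx : IrrUnit x) : (digit 0 x : ℝ) * x < 1 := by
  have hlt : (digit 0 x : ℝ) < 1 / x :=
    (Nat.floor_le (by simp [hx.2.1.le])).lt_of_ne (one_div x ▸ hx.1.inv.ne_nat _).symm
  rwa [lt_div_iff₀ hx.2.1] at hlt

theorem one_lt_digit_zero_add_one_mul (hx : IrrUnit x) : 1 < ((digit 0 x : ℝ) + 1) * x := by
  have hlt := Nat.lt_floor_add_one (1 / x)
  rwa [div_lt_iff₀ hx.2.1] at hlt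

theorem pierceT_eq (hx : IrrUnit x) : pierceT x = 1 - digit 0 x * x := by
  simp [pierceT, hx.2.1.ne', digit]

theorem pierceT_irrUnit (hx : IrrUnit x) : IrrUnit (pierceT x) := by
  have hd : (1 : ℝ) ≤ digit 0 x := by exact_mod_cast hx.digit_zero_pos
  rw [hx.pierceT_eq]
  refine ⟨?_, by linarith [hx.digit_zero_mul_lt_one], by nlinarith [hx.2.1]⟩
  simpa using (hx.1.natCast_mul hx.digit_zero_pos.ne').natCast_sub 1

theorem digit_zero_lt_digit_zero_pierceT (hx : IrrUnit x) : digit 0 x < digit 0 (pierceT x) := by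
  have hpos := hx.pierceT_irrUnit.2.1
  have hd : (0 : ℝ) ≤ digit 0 x := Nat.cast_nonneg _
  have hle : (digit 0 x : ℝ) + 1 ≤ 1 / pierceT x := by
    rw [le_div_iff₀ hpos, hx.pierceT_eq]
    nlinarith [hx.one_lt_digit_zero_add_one_mul]
  exact Nat.le_floor (by exact_mod_cast hle)

theorem iterate (hx : IrrUnit x) (k : ℕ) : IrrUnit (pierceT^[k] x) := by
  induction k with
  | zero => exact hx
  | succ k ih => rw [iterate_succ_apply']; exact ih.pierceT_irrUnit

theorem strictMono_digit (hx : IrrUnit x) : StrictMono (digit · x) :=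
  strictMono_nat_of_lt_succ fun j => by
    rw [← digit_zero_iterate j, ← digit_zero_iterate (j + 1), iterate_succ_apply']
    exact (hx.iterate j).digit_zero_lt_digit_zero_pierceT

theorem digit_pos (hx : IrrUnit x) (j : ℕ) : 0 < digit j x :=
  (hx.iterate j).digit_zero_pos

theorem add_digit_le (hx : IrrUnit x) {i j : ℕ} (h : i ≤ j) : digit i x + (j - i) ≤ digit j x := by
  have := hx.strictMono_digit.add_le_nat (j - i) i
  rwa [Nat.sub_add_cancel h, add_comm] at this

theorem lt_digit (hx : IrrUnit x) (j : ℕ) : j < digit j x := by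
  have := hx.add_digit_le j.zero_le
  have := hx.digit_zero_pos
  omega

theorem factorial_le_prod_digit (hx : IrrUnit x) (m : ℕ) :
    m.factorial ≤ ∏ j ∈ Finset.range m, digit j x := by
  rw [← Finset.prod_range_add_one_eq_factorial]
  exact Finset.prod_le_prod' fun j _ => hx.lt_digit j

theorem dist_pierceT (hx : IrrUnit x) (hy : IrrUnit y) (h : digit 0 x = digit 0 y) :
    dist (pierceT x) (pierceT y) = digit 0 x * dist x y := by
  rw [hx.pierceT_eq, hy.pierceT_eq, h, Real.dist_eq, Real.dist_eq,
    show 1 - digit 0 y * x - (1 - digit 0 y * y) = -(digit 0 y * (x - y)) by ring,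
    abs_neg, abs_mul, Nat.abs_cast]

theorem dist_iterate (hx : IrrUnit x) (hy : IrrUnit y) {m : ℕ}
    (h : ∀ j < m, digit j x = digit j y) :
    dist (pierceT^[m] x) (pierceT^[m] y) = (∏ j ∈ Finset.range m, (digit j x : ℝ)) * dist x y := by
  induction m with
  | zero => simp
  | succ m ih =>
    rw [iterate_succ_apply', iterate_succ_apply',
      (hx.iterate m).dist_pierceT (hy.iterate m) (h m (lt_add_one m)),
      ih fun j hj => h j (hj.trans (lt_add_one m)), Finset.prod_range_succ, digit_zero_iterate]
    ring

theorem natCast_mul_dist_lt_one (hx : IrrUnit x) (hy : IrrUnit y) {m : ℕ}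
    (h : ∀ j < m, digit j x = digit j y) : (m : ℝ) * dist x y < 1 := by
  have hm : (m : ℝ) ≤ ∏ j ∈ Finset.range m, (digit j x : ℝ) := by
    exact_mod_cast (Nat.self_le_factorial m).trans (hx.factorial_le_prod_digit m)
  have hTx := (hx.iterate m).2
  have hTy := (hy.iterate m).2
  calc (m : ℝ) * dist x y ≤ (∏ j ∈ Finset.range m, (digit j x : ℝ)) * dist x y := by gcongr
    _ = dist (pierceT^[m] x) (pierceT^[m] y) := (hx.dist_iterate hy h).symm
    _ < 1 := by
      rw [Real.dist_eq, abs_sub_lt_iff]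
      constructor <;> linarith [hTx.1, hTx.2, hTy.1, hTy.2]

theorem dist_lt_one_div (hx : IrrUnit x) (hy : IrrUnit y) {N : ℕ}
    (h : ∀ j ≤ N, digit j x = digit j y) : dist x y < 1 / (N + 1) := by
  have hmul := hx.natCast_mul_dist_lt_one hy (m := N + 1) fun j hj => h j (Nat.lt_succ_iff.1 hj)
  push_cast at hmul
  rw [lt_div_iff₀ (by positivity)]
  linarith

theorem eq_of_forall_digit_eq (hx : IrrUnit x) (hy : IrrUnit y) (h : ∀ j, digit j x = digit j y) :
    x = y := by
  by_contra hne
  obtain ⟨m, hm⟩ := exists_nat_gt (1 / dist x y)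
  rw [div_lt_iff₀ (dist_pos.2 hne)] at hm
  linarith [hx.natCast_mul_dist_lt_one hy (m := m) fun j _ => h j]

theorem one_sub_div (ht : IrrUnit t) {d : ℕ} (hd : 0 < d) : IrrUnit ((1 - t) / d) := by
  have hd' : (1 : ℝ) ≤ d := by exact_mod_cast hd
  refine ⟨(by simpa using ht.1.natCast_sub 1 : Irrational (1 - t)).div_natCast hd.ne', ?_, ?_⟩
  · exact div_pos (by linarith [ht.2.2]) (by linarith)
  · rw [div_lt_one (by linarith)]; linarith [ht.2.1]

theorem digit_zero_one_sub_div (ht : IrrUnit t) {d : ℕ} (hd : 0 < d) (hdt : d < digit 0 t) :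
    digit 0 ((1 - t) / d) = d := by
  have hd' : (0 : ℝ) < d := by exact_mod_cast hd
  have hdt' : (d : ℝ) + 1 ≤ digit 0 t := by exact_mod_cast hdt
  have h1t : 0 < 1 - t := by linarith [ht.2.2]
  have hlt : ((d : ℝ) + 1) * t < 1 := by nlinarith [ht.digit_zero_mul_lt_one, ht.2.1]
  rw [digit, iterate_zero_apply, one_div_div, Nat.floor_eq_iff (by positivity),
    le_div_iff₀ h1t, div_lt_iff₀ h1t]
  constructor <;> nlinarith [ht.2.1]

theorem pierceT_one_sub_div (ht : IrrUnit t) {d : ℕ} (hd : 0 < d) (hdt : d < digit 0 t) :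
    pierceT ((1 - t) / d) = t := by
  have hd' : (d : ℝ) ≠ 0 := by exact_mod_cast hd.ne'
  rw [(ht.one_sub_div hd).pierceT_eq, ht.digit_zero_one_sub_div hd hdt]
  field_simp
  ring

end IrrUnit

/-- `branch g m` inverts `pierceT^[m]` on the points with digits `g 0, …, g (m - 1)`. -/
noncomputable def branch (g : ℕ → ℕ) : ℕ → ℝ → ℝ
  | 0, t => t
  | m + 1, t => branch g m ((1 - t) / g m)

theorem dist_branch (g : ℕ → ℕ) (m : ℕ) (t t' : ℝ) :
    dist (branch g m t) (branch g m t') = dist t t' / ∏ j ∈ Finset.range m, (g j : ℝ) := by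
  induction m generalizing t t' with
  | zero => simp [branch]
  | succ m ih =>
    rw [branch, branch, ih, Finset.prod_range_succ, mul_comm, ← div_div, Real.dist_eq,
      Real.dist_eq, ← sub_div, abs_div, Nat.abs_cast, sub_sub_sub_cancel_left, abs_sub_comm]

theorem IrrUnit.branch {g : ℕ → ℕ} (hg : StrictMono g) (hg0 : 0 < g 0) {m : ℕ} {t : ℝ}
    (ht : IrrUnit t) (h : ∀ j < m, g j < digit 0 t) :
    IrrUnit (branch g m t) ∧ pierceT^[m] (branch g m t) = t ∧
      ∀ j < m, digit j (branch g m t) = g j := by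
  induction m generalizing t with
  | zero => exact ⟨ht, rfl, fun j hj => absurd hj j.not_lt_zero⟩
  | succ m ih =>
    have hgm : 0 < g m := hg0.trans_le (hg.monotone m.zero_le)
    have hdig := ht.digit_zero_one_sub_div hgm (h m (lt_add_one m))
    obtain ⟨hy, hiter, hdigits⟩ :=
      ih (ht.one_sub_div hgm) fun j hj => by rw [hdig]; exact hg hj
    refine ⟨hy, ?_, fun j hj => ?_⟩
    · rw [Pierce.branch, iterate_succ_apply', hiter,
        ht.pierceT_one_sub_div hgm (h m (lt_add_one m))]
    · rcases Nat.lt_succ_iff_lt_or_eq.1 hj with hj | rfl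
      · exact hdigits j hj
      · rw [Pierce.branch, ← digit_zero_iterate, hiter, hdig]

def cylinder (m : ℕ) (ρ : Fin m → ℕ) : Set ℝ := {x | IrrUnit x ∧ ∀ j : Fin m, digit j x = ρ j}

def FiniteReplacementInvariant (F : Set ℝ) : Prop :=
  ∀ x ∈ F, ∀ n : ℕ, ∀ y ∈ Icc (0 : ℝ) 1,
    (∀ k, n < k → pierceDigit k y = pierceDigit k x) → y ∈ F

theorem FiniteReplacementInvariant.mem_of_iterate_eq {F : Set ℝ} (hF : FiniteReplacementInvariant F)
    {x y : ℝ} {m : ℕ} (hx : x ∈ F) (hy : y ∈ Icc 0 1) (h : pierceT^[m] y = pierceT^[m] x) :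
    y ∈ F :=
  hF x hx m y hy fun k hk => by
    obtain ⟨i, rfl⟩ : ∃ i, k = i + m + 1 := ⟨k - m - 1, by omega⟩
    simp only [pierceDigit, Nat.add_sub_cancel, iterate_add_apply, h]

theorem FiniteReplacementInvariant.dimH_inter_cylinder_le {F : Set ℝ}
    (hF : FiniteReplacementInvariant F) {g : ℕ → ℕ} (hg : StrictMono g) (hg0 : 0 < g 0) {m : ℕ}
    (ρ : Fin m → ℕ) :
    dimH (F ∩ cylinder m ρ ∩ {x | ∀ j < m, g j < digit m x}) ≤
      dimH (F ∩ cylinder m fun j => g j) := by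
  set S := F ∩ cylinder m ρ ∩ {x | ∀ j < m, g j < digit m x}
  set replace : ℝ → ℝ := fun x => branch g m (pierceT^[m] x)
  have hmaps : MapsTo replace S (F ∩ cylinder m fun j => g j) := by
    rintro x ⟨⟨hxF, hx, -⟩, hgx⟩
    obtain ⟨hy, hiter, hdig⟩ := (hx.iterate m).branch hg hg0 hgx
    exact ⟨hF.mem_of_iterate_eq hxF (Ioo_subset_Icc_self hy.2) hiter, hy, fun j => hdig j j.2⟩
  have hPg : (0 : ℝ) < ∏ j ∈ Finset.range m, (g j : ℝ) :=
    Finset.prod_pos fun j _ => by exact_mod_cast hg0.trans_le (hg.monotone j.zero_le)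
  have hdist : ∀ x ∈ S, ∀ x' ∈ S,
      dist x x' ≤ (∏ j ∈ Finset.range m, (g j : ℝ≥0)) * dist (replace x) (replace x') := by
    rintro x ⟨⟨-, hx, hxρ⟩, -⟩ x' ⟨⟨-, hx', hx'ρ⟩, -⟩
    have hsame : ∀ j < m, digit j x = digit j x' := fun j hj =>
      (hxρ ⟨j, hj⟩).trans (hx'ρ ⟨j, hj⟩).symm
    have hPx : (1 : ℝ) ≤ ∏ j ∈ Finset.range m, (digit j x : ℝ) := by
      exact_mod_cast (Nat.factorial_pos m).trans_le (hx.factorial_le_prod_digit m)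
    simp only [replace, dist_branch, hx.dist_iterate hx' hsame, NNReal.coe_prod,
      NNReal.coe_natCast]
    rw [mul_div_cancel₀ _ hPg.ne']
    exact le_mul_of_one_le_left dist_nonneg hPx
  exact (dimH_le_dimH_image_of_dist_le_mul _ hdist).trans (dimH_mono hmaps.image_subset)

theorem IrrUnit.exists_forall_lt_digit {x : ℝ} (hx : IrrUnit x)
    (hunb : ∀ C, ∃ j, j + C < digit j x) {g : ℕ → ℕ} {C : ℕ} (hg : ∀ j, g j ≤ j + C) (N : ℕ) :
    ∃ m, N < m ∧ ∀ j < m, g j < digit m x := by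
  obtain ⟨i, hi⟩ := hunb C
  refine ⟨max i N + 1, by omega, fun j hj => ?_⟩
  have := hx.add_digit_le (show i ≤ max i N + 1 by omega)
  have := hg j
  omega

theorem countable_setOf_digit_le_add :
    {x | IrrUnit x ∧ ∃ C, ∀ j, digit j x ≤ j + C}.Countable := by
  have hsub : {x | IrrUnit x ∧ ∃ C, ∀ j, digit j x ≤ j + C} ⊆
      ⋃ k, {x | IrrUnit x ∧ ∀ j ≥ k, digit j x = digit k x + (j - k)} := by
    rintro x ⟨hx, C, hC⟩
    -- the excess `digit j x - j` is monotone and bounded, hence eventually constant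
    have hmono : Monotone fun j => digit j x - j := monotone_nat_of_le_succ fun j => by
      have : digit j x < digit (j + 1) x := hx.strictMono_digit (lt_add_one j)
      have := hx.lt_digit j
      omega
    obtain ⟨k, hk⟩ := exists_forall_ge_eq_of_monotone hmono (C := C) fun j => by
      have := hC j
      omega
    refine mem_iUnion.2 ⟨k, hx, fun j hj => ?_⟩
    have := hk j hj
    have := hx.lt_digit j
    have := hx.lt_digit k
    omega
  refine Countable.mono hsub (countable_iUnion fun k => ?_)
  refine (mapsTo_univ (fun x (i : Fin (k + 1)) => digit i x) _).countable_of_injOn ?_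
    countable_univ
  rintro x ⟨hx, hxk⟩ y ⟨hy, hyk⟩ hxy
  have hinit : ∀ i ≤ k, digit i x = digit i y := fun i hi =>
    congrFun hxy ⟨i, Nat.lt_succ_of_le hi⟩
  refine hx.eq_of_forall_digit_eq hy fun j => ?_
  rcases le_total j k with h | h
  · exact hinit j h
  · rw [hxk j h, hyk j h, hinit k le_rfl]

theorem subset_union_cylinders {F : Set ℝ} (hF : F ⊆ Icc 0 1) {g : ℕ → ℕ} {C : ℕ}
    (hg : ∀ j, g j ≤ j + C) (N : ℕ) :
    F ⊆ (range ((↑) : ℚ → ℝ) ∪ {x | IrrUnit x ∧ ∃ C, ∀ j, digit j x ≤ j + C}) ∪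
      ⋃ m ∈ Ioi N, ⋃ ρ : Fin m → ℕ, F ∩ cylinder m ρ ∩ {x | ∀ j < m, g j < digit m x} := by
  intro x hxF
  by_cases hirr : Irrational x
  swap
  · exact Or.inl (Or.inl (not_not.1 hirr))
  have hx := irrUnit_of_mem_Icc hirr (hF hxF)
  by_cases hbdd : ∃ C, ∀ j, digit j x ≤ j + C
  · exact Or.inl (Or.inr ⟨hx, hbdd⟩)
  simp only [not_exists, not_forall, not_le] at hbdd
  obtain ⟨m, hm, hgm⟩ := hx.exists_forall_lt_digit hbdd hg N
  exact Or.inr (mem_biUnion hm (mem_iUnion.2 ⟨fun j => digit j x, ⟨hxF, hx, fun _ => rfl⟩, hgm⟩))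

theorem exists_irrUnit_ball_subset {V : Set ℝ} (hV : IsOpen V) (hne : (V ∩ Icc 0 1).Nonempty) :
    ∃ x, IrrUnit x ∧ ∃ ε > 0, ball x ε ⊆ V ∩ Icc 0 1 := by
  have hW : (V ∩ Ioo 0 1).Nonempty := by
    obtain ⟨u, huV, huI⟩ := hne
    rw [← closure_Ioo zero_ne_one] at huI
    exact mem_closure_iff.1 huI V hV huV
  obtain ⟨x, hx, hxW⟩ := dense_irrational.exists_mem_open (hV.inter isOpen_Ioo) hW
  obtain ⟨ε, hε, hball⟩ := Metric.isOpen_iff.1 (hV.inter isOpen_Ioo) x hxW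
  exact ⟨x, ⟨hx, hxW.2⟩, ε, hε, hball.trans (inter_subset_inter_right V Ioo_subset_Icc_self)⟩

noncomputable def extendDigits (x : ℝ) (N j : ℕ) : ℕ := digit (min j N) x + (j - N)

theorem extendDigits_of_le {x : ℝ} {N j : ℕ} (h : j ≤ N) : extendDigits x N j = digit j x := by
  simp [extendDigits, h]

theorem IrrUnit.strictMono_extendDigits {x : ℝ} (hx : IrrUnit x) (N : ℕ) :
    StrictMono (extendDigits x N) :=
  strictMono_nat_of_lt_succ fun j => by
    rcases lt_or_ge j N with h | h
    · rw [extendDigits_of_le h.le, extendDigits_of_le h]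
      exact hx.strictMono_digit (lt_add_one j)
    · simp only [extendDigits, min_eq_right h, min_eq_right (h.trans (Nat.le_succ j))]
      omega

theorem IrrUnit.extendDigits_le {x : ℝ} (hx : IrrUnit x) (N j : ℕ) :
    extendDigits x N j ≤ j + digit N x := by
  have := hx.strictMono_digit.monotone (min_le_right j N)
  simp only [extendDigits]
  omega

end Pierce

open Pierce in
theorem stmt1 (F : Set ℝ) (hF : F ⊆ Set.Icc 0 1)
    (hinv : ∀ x ∈ F, ∀ n : ℕ, ∀ y ∈ Set.Icc (0 : ℝ) 1,
      (∀ k, n < k → pierceDigit k y = pierceDigit k x) → y ∈ F)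
    (U : Set ℝ) (hU : U.Nonempty)
    (hopen : ∃ V : Set ℝ, IsOpen V ∧ U = V ∩ Set.Icc 0 1) :
    dimH (U ∩ F) = dimH F := by
  refine le_antisymm (dimH_mono inter_subset_right) ?_
  obtain ⟨V, hV, rfl⟩ := hopen
  obtain ⟨x₀, hx₀, ε, hε, hball⟩ := exists_irrUnit_ball_subset hV hU
  obtain ⟨N, hN⟩ := exists_nat_one_div_lt hε
  have hcyl : ∀ m > N, cylinder m (fun j => extendDigits x₀ N j) ⊆ V ∩ Icc 0 1 := by
    rintro m hm y ⟨hy, hyg⟩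
    refine hball (mem_ball.2 ((hy.dist_lt_one_div hx₀ fun j hj => ?_).trans hN))
    exact (hyg ⟨j, by omega⟩).trans (extendDigits_of_le hj)
  have hexc := ((countable_range ((↑) : ℚ → ℝ)).union countable_setOf_digit_le_add).dimH_zero
  calc dimH F ≤ _ := dimH_mono (subset_union_cylinders hF (hx₀.extendDigits_le N) N)
    _ ≤ dimH (V ∩ Icc 0 1 ∩ F) := by
      rw [dimH_union, hexc, max_eq_right zero_le, dimH_bUnion (to_countable _)]
      refine iSup₂_le fun m hm => (dimH_iUnion _).trans_le (iSup_le fun ρ => ?_)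
      refine (FiniteReplacementInvariant.dimH_inter_cylinder_le hinv
        (hx₀.strictMono_extendDigits N)
        (by rw [extendDigits_of_le N.zero_le]; exact hx₀.digit_pos 0) ρ).trans (dimH_mono ?_)
      rw [inter_comm]
      exact inter_subset_inter_left F (hcyl m hm)
end

section
/- For each α ∈ [0,∞], the set A(α) is dense in [0,1]. -/
open Filter Set Topology MeasureTheory
open scoped ENNReal NNReal

/-!
A strictly increasing digit sequence `d` is realised by the alternating series
`x = ∑ (-1)ⁿ / (d₀ ⋯ dₙ)`, and choosing `dₖ ≈ exp ((k + 1) · min α k)` gives a point of `A(α)`.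
Since the digits of `T x` are those of `x` shifted by one, `A(α)` is invariant under `T` in
both directions. Applying `T` repeatedly to the point above yields points of `A(α)` arbitrarily
close to `0`; the inverse branches `y ↦ (1 - y) / j` of `T` then transport them next to any
target `t`, following the Pierce algorithm of `t`. Each branch contracts by `1 / j`, so `n` steps
reach `t` up to `2⁻ⁿ`.
-/

lemma ENNReal.tendsto_div_add_one_iff {a : ℕ → ℝ≥0∞} {α : ℝ≥0∞} :
    Tendsto (fun n : ℕ => a n / (n + 1)) atTop (𝓝 α) ↔
      Tendsto (fun n : ℕ => a n / n) atTop (𝓝 α) := by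
  have hr : Tendsto (fun n : ℕ => (n + 1 : ℝ≥0∞) / n) atTop (𝓝 1) := by
    have h := (tendsto_const_nhds (x := (1 : ℝ≥0∞))).add ENNReal.tendsto_inv_nat_nhds_zero
    rw [add_zero] at h
    refine h.congr' ?_
    filter_upwards [eventually_ne_atTop 0] with n hn
    rw [ENNReal.add_div, ENNReal.div_self (by simpa) (by simp), one_div]
  have hr' : Tendsto (fun n : ℕ => (n : ℝ≥0∞) / (n + 1)) atTop (𝓝 1) := by
    simpa [ENNReal.inv_div] using tendsto_inv_iff.2 hr
  have hmul {f r : ℕ → ℝ≥0∞} (hf : Tendsto f atTop (𝓝 α)) (hr : Tendsto r atTop (𝓝 1)) :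
      Tendsto (fun n => f n * r n) atTop (𝓝 α) := by
    simpa using ENNReal.Tendsto.mul hf (Or.inr ENNReal.one_ne_top) hr (Or.inl one_ne_zero)
  constructor
  · refine fun h => (hmul h hr).congr' ?_
    filter_upwards [eventually_ne_atTop 0] with n hn
    rw [div_eq_mul_inv, div_eq_mul_inv, div_eq_mul_inv, mul_assoc, ← mul_assoc _ (n + 1 : ℝ≥0∞),
      ENNReal.inv_mul_cancel (by simp) (by simp), one_mul]
  · refine fun h => (hmul h hr').congr' ?_
    filter_upwards [eventually_ne_atTop 0] with n hn
    rw [div_eq_mul_inv, div_eq_mul_inv, div_eq_mul_inv, mul_assoc, ← mul_assoc _ (n : ℝ≥0∞),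
      ENNReal.inv_mul_cancel (by simpa) (by simp), one_mul]

lemma pierceT_mem_Icc {x : ℝ} (hx : 0 ≤ x) : pierceT x ∈ Icc (0 : ℝ) 1 := by
  unfold pierceT
  split_ifs with h0
  · simp
  · have hfloor : (⌊1 / x⌋₊ : ℝ) * x ≤ 1 := by
      calc (⌊1 / x⌋₊ : ℝ) * x ≤ 1 / x * x := by gcongr; exact Nat.floor_le (by positivity)
        _ = 1 := one_div_mul_cancel h0
    constructor <;> nlinarith [(Nat.cast_nonneg _ : (0 : ℝ) ≤ ⌊1 / x⌋₊)]

lemma pierceT_mem_Ico {t : ℝ} (ht : t ∈ Ioc 0 1) :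
    pierceT t ∈ Ico 0 ((⌊1 / t⌋₊ : ℝ) + 1)⁻¹ := by
  have hj : (1 : ℝ) ≤ ⌊1 / t⌋₊ := by exact_mod_cast Nat.floor_pos.2 (one_le_one_div ht.1 ht.2)
  have hlt : 1 < ((⌊1 / t⌋₊ : ℝ) + 1) * t := by
    simpa [ht.1.ne'] using mul_lt_mul_of_pos_right (Nat.lt_floor_add_one (1 / t)) ht.1
  refine ⟨(pierceT_mem_Icc ht.1.le).1, ?_⟩
  rw [pierceT, if_neg ht.1.ne', ← one_div, lt_div_iff₀ (by positivity)]
  nlinarith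

lemma eq_one_sub_pierceT_div {t : ℝ} (ht : t ∈ Ioc 0 1) :
    t = (1 - pierceT t) / ⌊1 / t⌋₊ := by
  have hj : (⌊1 / t⌋₊ : ℝ) ≠ 0 := by
    simpa using (Nat.floor_pos.2 (one_le_one_div ht.1 ht.2)).ne'
  rw [pierceT, if_neg ht.1.ne']
  field_simp
  ring

lemma pierceT_one_sub_div {j : ℕ} (hj : 0 < j) {y : ℝ} (hy : y ∈ Ico 0 ((j : ℝ) + 1)⁻¹) :
    pierceT ((1 - y) / j) = y := by
  have hyj : y * (j + 1) < 1 := by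
    simpa [inv_mul_cancel₀ (by positivity : (j : ℝ) + 1 ≠ 0)]
      using mul_lt_mul_of_pos_right hy.2 (by positivity : (0 : ℝ) < j + 1)
  have h1y : 0 < 1 - y := by nlinarith [hy.1]
  have hfloor : ⌊1 / ((1 - y) / j)⌋₊ = j := by
    rw [Nat.floor_eq_iff (by positivity), one_div_div, le_div_iff₀ h1y, div_lt_iff₀ h1y]
    constructor <;> nlinarith [hy.1]
  rw [pierceT, if_neg (by positivity), hfloor]
  field_simp
  ring

lemma pierceDigit_succ_pierceT (n : ℕ) (x : ℝ) :
    pierceDigit (n + 1) (pierceT x) = pierceDigit (n + 2) x := by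
  simp [pierceDigit, Function.iterate_succ_apply]

lemma pierceT_mem_pierceA_iff {α : ℝ≥0∞} {x : ℝ} (hx : x ∈ Icc (0 : ℝ) 1) :
    pierceT x ∈ pierceA α ↔ x ∈ pierceA α := by
  simp only [pierceA, mem_ofPred_eq, pierceT_mem_Icc hx.1, hx, true_and]
  rw [← ENNReal.tendsto_div_add_one_iff, iff_comm, ← tendsto_add_atTop_iff_nat 1]
  refine tendsto_congr' ?_
  filter_upwards [eventually_ne_atTop 0] with n hn
  obtain ⟨k, rfl⟩ := Nat.exists_eq_succ_of_ne_zero hn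
  push_cast
  rw [pierceDigit_succ_pierceT]

lemma mapsTo_pierceT_pierceA (α : ℝ≥0∞) : MapsTo pierceT (pierceA α) (pierceA α) :=
  fun _ hx => (pierceT_mem_pierceA_iff hx.1).2 hx

lemma one_sub_div_mem_pierceA {α : ℝ≥0∞} {j : ℕ} (hj : 0 < j) {y : ℝ} (hyA : y ∈ pierceA α)
    (hy : y ∈ Ico 0 ((j : ℝ) + 1)⁻¹) : (1 - y) / j ∈ pierceA α := by
  have hj' : (1 : ℝ) ≤ j := by exact_mod_cast hj
  have hy1 : y ≤ 1 := hyA.1.2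
  refine (pierceT_mem_pierceA_iff ⟨div_nonneg (by linarith) (Nat.cast_nonneg j), ?_⟩).1
    (by rwa [pierceT_one_sub_div hj hy])
  rw [div_le_one (by positivity)]
  linarith [hy.1]

def PierceAdmissible (d : ℕ → ℕ) : Prop := StrictMono d ∧ 0 < d 0

namespace PierceAdmissible

variable {d : ℕ → ℕ}

lemma shift (hd : PierceAdmissible d) (k : ℕ) : PierceAdmissible fun n => d (n + k) :=
  ⟨fun _ _ h => hd.1 (by omega), by simpa using hd.2.trans_le (hd.1.monotone (Nat.zero_le k))⟩

lemma lt_apply (hd : PierceAdmissible d) (k : ℕ) : k < d k := by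
  have := hd.1.add_le_nat k 0
  have := hd.2
  simp only [add_zero] at *
  omega

end PierceAdmissible

noncomputable def pierceDenom (d : ℕ → ℕ) (n : ℕ) : ℝ := ∏ i ∈ Finset.range (n + 1), (d i : ℝ)

noncomputable def pierceSeries (d : ℕ → ℕ) : ℝ := ∑' n, (-1) ^ n * (pierceDenom d n)⁻¹

section

variable {d : ℕ → ℕ}

lemma pierceDenom_pos (hd : PierceAdmissible d) (n : ℕ) : 0 < pierceDenom d n :=
  Finset.prod_pos fun i _ => by exact_mod_cast (Nat.zero_le i).trans_lt (hd.lt_apply i)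

lemma two_mul_pierceDenom_le (hd : PierceAdmissible d) (n : ℕ) :
    2 * pierceDenom d n ≤ pierceDenom d (n + 1) := by
  rw [pierceDenom, pierceDenom, Finset.prod_range_succ _ (n + 1), mul_comm]
  gcongr
  have := hd.lt_apply (n + 1)
  exact_mod_cast (by omega : 2 ≤ d (n + 1))

namespace pierceSeries

lemma summable (hd : PierceAdmissible d) :
    Summable fun n => (-1 : ℝ) ^ n * (pierceDenom d n)⁻¹ := by
  have two_pow_le (n : ℕ) : (2 : ℝ) ^ n ≤ pierceDenom d n := by
    induction n with
    | zero => simpa [pierceDenom] using (by exact_mod_cast hd.2 : (1 : ℝ) ≤ d 0)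
    | succ n ih => rw [pow_succ']; linarith [two_mul_pierceDenom_le hd n]
  refine Summable.of_norm_bounded summable_geometric_two fun n => ?_
  simpa [abs_of_pos (pierceDenom_pos hd n)] using inv_anti₀ (by positivity) (two_pow_le n)

lemma mem_Icc (hd : PierceAdmissible d) : pierceSeries d ∈ Icc 0 ((d 0 : ℝ))⁻¹ := by
  have hl := (summable hd).hasSum.tendsto_sum_nat
  have hanti : Antitone fun n => (pierceDenom d n)⁻¹ := antitone_nat_of_succ_le fun n =>
    inv_anti₀ (pierceDenom_pos hd n)
      (by linarith [two_mul_pierceDenom_le hd n, pierceDenom_pos hd n])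
  exact ⟨by simpa [pierceSeries] using hanti.alternating_series_le_tendsto hl 0,
    by simpa [pierceSeries, pierceDenom] using hanti.tendsto_le_alternating_series hl 0⟩

lemma eq_inv_mul (hd : PierceAdmissible d) :
    pierceSeries d = ((d 0 : ℝ))⁻¹ * (1 - pierceSeries fun n => d (n + 1)) := by
  have hterm (n : ℕ) : (-1 : ℝ) ^ (n + 1) * (pierceDenom d (n + 1))⁻¹ =
      -((d 0 : ℝ))⁻¹ * ((-1) ^ n * (pierceDenom (fun i => d (i + 1)) n)⁻¹) := by
    rw [pierceDenom, pierceDenom, Finset.prod_range_succ' _ (n + 1)]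
    ring
  rw [pierceSeries, (summable hd).tsum_eq_zero_add, tsum_congr hterm, tsum_mul_left,
    pierceSeries]
  simp [pierceDenom]
  ring

lemma pos (hd : PierceAdmissible d) : 0 < pierceSeries d := by
  have htail : pierceSeries (fun n => d (n + 1)) ≤ ((d 1 : ℝ))⁻¹ := (mem_Icc (hd.shift 1)).2
  have hd1 : ((d 1 : ℝ))⁻¹ < 1 := inv_lt_one_of_one_lt₀ (by exact_mod_cast hd.lt_apply 1)
  rw [eq_inv_mul hd]
  exact mul_pos (by simpa using hd.2) (by linarith)

lemma inv_add_one_lt (hd : PierceAdmissible d) : ((d 0 : ℝ) + 1)⁻¹ < pierceSeries d := by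
  have hd0 : (0 : ℝ) < d 0 := by exact_mod_cast hd.2
  have hd1 : (d 0 : ℝ) + 1 ≤ d 1 := by exact_mod_cast hd.1 zero_lt_one
  have htail : pierceSeries (fun n => d (n + 1)) < ((d 0 : ℝ) + 1)⁻¹ := by
    rw [eq_inv_mul (hd.shift 1)]
    calc ((d 1 : ℝ))⁻¹ * (1 - pierceSeries fun n => d (n + 1 + 1))
        < ((d 1 : ℝ))⁻¹ :=
          mul_lt_of_lt_one_right (inv_pos.2 (by exact_mod_cast (hd.lt_apply 1).trans' zero_lt_one))
            (by linarith [pos ((hd.shift 1).shift 1)])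
      _ ≤ ((d 0 : ℝ) + 1)⁻¹ := inv_anti₀ (by positivity) hd1
  calc ((d 0 : ℝ) + 1)⁻¹ = ((d 0 : ℝ))⁻¹ * (1 - ((d 0 : ℝ) + 1)⁻¹) := by field_simp; ring
    _ < ((d 0 : ℝ))⁻¹ * (1 - pierceSeries fun n => d (n + 1)) := by gcongr
    _ = pierceSeries d := (eq_inv_mul hd).symm

lemma floor_one_div (hd : PierceAdmissible d) : ⌊1 / pierceSeries d⌋₊ = d 0 := by
  have hpos := pos hd
  have hd0 : (0 : ℝ) < d 0 := by exact_mod_cast hd.2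
  rw [Nat.floor_eq_iff (by positivity), one_div]
  exact ⟨(le_inv_comm₀ hpos hd0).1 (mem_Icc hd).2,
    (inv_lt_comm₀ (by positivity) hpos).1 (inv_add_one_lt hd)⟩

lemma pierceT_eq (hd : PierceAdmissible d) :
    pierceT (pierceSeries d) = pierceSeries fun n => d (n + 1) := by
  have hd0 : (d 0 : ℝ) ≠ 0 := by exact_mod_cast hd.2.ne'
  rw [pierceT, if_neg (pos hd).ne', floor_one_div hd, eq_inv_mul hd]
  field_simp
  ring

lemma pierceT_iterate (hd : PierceAdmissible d) (k : ℕ) :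
    pierceT^[k] (pierceSeries d) = pierceSeries fun n => d (n + k) := by
  induction k with
  | zero => rfl
  | succ k ih =>
    rw [Function.iterate_succ_apply', ih, pierceT_eq (hd.shift k)]
    simp only [add_right_comm _ 1 k, add_assoc]

lemma pierceDigit_eq (hd : PierceAdmissible d) (k : ℕ) :
    pierceDigit (k + 1) (pierceSeries d) = d k := by
  rw [pierceDigit, Nat.add_sub_cancel, pierceT_iterate hd, pierceD1,
    if_neg (pos (hd.shift k)).ne', floor_one_div (hd.shift k), zero_add]

lemma mem_pierceA {α : ℝ≥0∞} (hd : PierceAdmissible d)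
    (hα : Tendsto (fun k : ℕ => ENNReal.ofReal (Real.log (d k)) / (k + 1)) atTop (𝓝 α)) :
    pierceSeries d ∈ pierceA α := by
  refine ⟨⟨(pos hd).le, (mem_Icc hd).2.trans (inv_le_one_of_one_le₀ (by exact_mod_cast hd.2))⟩, ?_⟩
  rw [← tendsto_add_atTop_iff_nat 1]
  simpa [pierceDigit_eq hd, enlog] using hα

end pierceSeries

end

lemma ENNReal.ofReal_div_natCast_add_one (x : ℝ) (k : ℕ) :
    ENNReal.ofReal x / (k + 1) = ENNReal.ofReal (x / (k + 1)) := by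
  rw [ENNReal.ofReal_div_of_pos (by positivity), ENNReal.ofReal_add (by positivity) zero_le_one,
    ENNReal.ofReal_natCast, ENNReal.ofReal_one]

lemma tendsto_log_add_two_div_add_one :
    Tendsto (fun k : ℕ => Real.log (k + 2) / (k + 1)) atTop (𝓝 0) := by
  have h := (Real.tendsto_pow_log_div_mul_add_atTop 1 (-1) 1 one_ne_zero).comp
    (tendsto_atTop_add_const_right atTop 2 tendsto_natCast_atTop_atTop)
  refine h.congr fun k => ?_
  simp only [Function.comp_apply, pow_one]
  ring_nf

-- `min α k` tends to `α` also when `α = ∞`; the summand `k` makes the sequence strictly increasing.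
noncomputable def pierceGrowthSeq (α : ℝ≥0∞) (k : ℕ) : ℕ :=
  ⌈Real.exp ((k + 1) * (min α k).toReal)⌉₊ + k

lemma monotone_toReal_min_natCast (α : ℝ≥0∞) : Monotone fun k : ℕ => (min α k).toReal :=
  fun i j hij => ENNReal.toReal_mono (ne_top_of_le_ne_top (ENNReal.natCast_ne_top j)
    (min_le_right _ _)) (min_le_min_left _ (by exact_mod_cast hij))

lemma pierceAdmissible_pierceGrowthSeq (α : ℝ≥0∞) : PierceAdmissible (pierceGrowthSeq α) := by
  refine ⟨strictMono_nat_of_lt_succ fun k => ?_, by simp [pierceGrowthSeq]⟩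
  have := Nat.ceil_mono <| Real.exp_le_exp.2 <|
    mul_le_mul (by push_cast; linarith : (k : ℝ) + 1 ≤ ((k + 1 : ℕ) : ℝ) + 1)
      (monotone_toReal_min_natCast α (Nat.le_add_right k 1)) ENNReal.toReal_nonneg
      (by positivity)
  simp only [pierceGrowthSeq] at this ⊢
  omega

lemma log_pierceGrowthSeq_div_mem_Icc (α : ℝ≥0∞) (k : ℕ) :
    Real.log (pierceGrowthSeq α k) / (k + 1) ∈
      Icc (min α k).toReal ((min α k).toReal + Real.log (k + 2) / (k + 1)) := by
  set e := Real.exp ((k + 1) * (min α k).toReal) with he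
  have he1 : 1 ≤ e := Real.one_le_exp (by positivity)
  have hd_ge : e ≤ pierceGrowthSeq α k := by
    have := Nat.le_ceil e
    simp only [pierceGrowthSeq]; push_cast; linarith [(Nat.cast_nonneg k : (0 : ℝ) ≤ k)]
  have hd_le : (pierceGrowthSeq α k : ℝ) ≤ e * (k + 2) := by
    have := Nat.ceil_lt_add_one (zero_le_one.trans he1)
    simp only [pierceGrowthSeq]; push_cast
    nlinarith [(Nat.cast_nonneg k : (0 : ℝ) ≤ k)]
  have hd_pos : (0 : ℝ) < pierceGrowthSeq α k := by linarith
  constructor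
  · rw [le_div_iff₀ (by positivity), mul_comm, Real.le_log_iff_exp_le hd_pos]
    exact hd_ge
  · rw [div_le_iff₀ (by positivity), add_mul, div_mul_cancel₀ _ (by positivity)]
    calc Real.log (pierceGrowthSeq α k) ≤ Real.log (e * (k + 2)) := Real.log_le_log hd_pos hd_le
      _ = (min α k).toReal * (k + 1) + Real.log (k + 2) := by
        rw [Real.log_mul (by positivity) (by positivity), he, Real.log_exp]; ring

lemma tendsto_log_pierceGrowthSeq_div (α : ℝ≥0∞) :
    Tendsto (fun k : ℕ => ENNReal.ofReal (Real.log (pierceGrowthSeq α k)) / (k + 1)) atTop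
      (𝓝 α) := by
  have hofReal (k : ℕ) : ENNReal.ofReal (min α k).toReal = min α k :=
    ENNReal.ofReal_toReal (ne_top_of_le_ne_top (ENNReal.natCast_ne_top k) (min_le_right _ _))
  have hlim : Tendsto (fun k : ℕ => min α k) atTop (𝓝 α) := by
    simpa using tendsto_const_nhds.min ENNReal.tendsto_nat_nhds_top
  refine tendsto_of_tendsto_of_tendsto_of_le_of_le hlim
    (by simpa using hlim.add (ENNReal.tendsto_ofReal tendsto_log_add_two_div_add_one))
    (fun k => ?_) (fun k => ?_)
  all_goals rw [← hofReal, ENNReal.ofReal_div_natCast_add_one]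
  · exact ENNReal.ofReal_le_ofReal (log_pierceGrowthSeq_div_mem_Icc α k).1
  · exact (ENNReal.ofReal_le_ofReal (log_pierceGrowthSeq_div_mem_Icc α k).2).trans
      ENNReal.ofReal_add_le

lemma exists_mem_pierceA_Ioo (α : ℝ≥0∞) {ε : ℝ} (hε : 0 < ε) : ∃ x ∈ pierceA α, x ∈ Ioo 0 ε := by
  have hd := pierceAdmissible_pierceGrowthSeq α
  obtain ⟨M, hM⟩ := exists_nat_one_div_lt hε
  refine ⟨pierceT^[M] (pierceSeries (pierceGrowthSeq α)), (mapsTo_pierceT_pierceA α).iterate M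
    (pierceSeries.mem_pierceA hd (tendsto_log_pierceGrowthSeq_div α)), ?_⟩
  rw [pierceSeries.pierceT_iterate hd]
  refine ⟨pierceSeries.pos (hd.shift M), (pierceSeries.mem_Icc (hd.shift M)).2.trans_lt ?_⟩
  have hdM : (M : ℝ) + 1 ≤ pierceGrowthSeq α (0 + M) := by
    rw [zero_add]; exact_mod_cast hd.lt_apply M
  calc ((pierceGrowthSeq α (0 + M) : ℝ))⁻¹ ≤ ((M : ℝ) + 1)⁻¹ := inv_anti₀ (by positivity) hdM
    _ < ε := by rwa [← one_div]

lemma exists_mem_pierceA_abs_sub_le_of_mem_Icc (α : ℝ≥0∞) {δ t : ℝ} (hδ : 0 < δ)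
    (ht : t ∈ Icc 0 δ) : ∃ x ∈ pierceA α, x ∈ Ioo 0 δ ∧ |x - t| ≤ δ := by
  obtain ⟨x, hxA, hx⟩ := exists_mem_pierceA_Ioo α hδ
  exact ⟨x, hxA, hx, abs_le.2 ⟨by linarith [hx.1, ht.2], by linarith [hx.2, ht.1]⟩⟩

lemma exists_mem_pierceA_abs_sub_eq {α : ℝ≥0∞} {t y : ℝ} (ht : t ∈ Ioc 0 1)
    (hyA : y ∈ pierceA α) (hy : y ∈ Ioo 0 ((⌊1 / t⌋₊ : ℝ) + 1)⁻¹) :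
    ∃ x ∈ pierceA α, x ∈ Ioo 0 (⌊1 / t⌋₊ : ℝ)⁻¹ ∧ |x - t| = |y - pierceT t| / ⌊1 / t⌋₊ := by
  have ht_eq := eq_one_sub_pierceT_div ht
  set j := ⌊1 / t⌋₊
  have hj : 0 < j := Nat.floor_pos.2 (one_le_one_div ht.1 ht.2)
  have hjr : (1 : ℝ) ≤ j := by exact_mod_cast hj
  have hy1 : ((j : ℝ) + 1)⁻¹ ≤ 1 := inv_le_one_of_one_le₀ (by linarith)
  refine ⟨(1 - y) / j, one_sub_div_mem_pierceA hj hyA ⟨hy.1.le, hy.2⟩,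
    ⟨div_pos (by linarith [hy.2]) (by positivity), ?_⟩, ?_⟩
  · rw [← one_div]
    gcongr
    linarith [hy.1]
  · conv_lhs => rw [ht_eq]
    rw [← sub_div, abs_div, abs_of_pos (by linarith : (0 : ℝ) < j), sub_sub_sub_cancel_left,
      abs_sub_comm]

lemma exists_mem_pierceA_abs_sub_le (α : ℝ≥0∞) (n : ℕ) {m : ℕ} (hm : 0 < m) {t : ℝ}
    (ht : t ∈ Icc 0 (m : ℝ)⁻¹) :
    ∃ x ∈ pierceA α, x ∈ Ioo 0 (m : ℝ)⁻¹ ∧ |x - t| ≤ ((m : ℝ) * 2 ^ n)⁻¹ := by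
  induction n generalizing m t with
  | zero => simpa using exists_mem_pierceA_abs_sub_le_of_mem_Icc α (by positivity) ht
  | succ n ih =>
    have hm' : (1 : ℝ) ≤ m := by exact_mod_cast hm
    set δ := ((m : ℝ) * 2 ^ (n + 1))⁻¹ with hδ_def
    by_cases hsmall : t ≤ δ
    · have hδm : δ ≤ (m : ℝ)⁻¹ :=
        inv_anti₀ (by positivity) (le_mul_of_one_le_right (by positivity) (one_le_pow₀ one_le_two))
      obtain ⟨x, hxA, hx, hxt⟩ :=
        exists_mem_pierceA_abs_sub_le_of_mem_Icc α (by positivity) ⟨ht.1, hsmall⟩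
      exact ⟨x, hxA, ⟨hx.1, hx.2.trans_le hδm⟩, hxt⟩
    -- Otherwise approximate `T t` with `m` replaced by `j + 1`, and pull back along `T`.
    have ht' : t ∈ Ioc 0 1 :=
      ⟨(by positivity : 0 < δ).trans (not_le.1 hsmall), ht.2.trans (inv_le_one_of_one_le₀ hm')⟩
    set j := ⌊1 / t⌋₊
    have hmj : (m : ℝ) ≤ j := by
      refine Nat.cast_le.2 (Nat.le_floor ?_)
      rw [one_div]
      exact (le_inv_comm₀ ht'.1 (by positivity)).1 ht.2
    have hTt := pierceT_mem_Ico ht'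
    obtain ⟨y, hyA, hy, hyt⟩ := ih (m := j + 1) (by omega) (t := pierceT t)
      (by push_cast; exact ⟨hTt.1, hTt.2.le⟩)
    push_cast at hy hyt
    obtain ⟨x, hxA, hx, hxt⟩ := exists_mem_pierceA_abs_sub_eq ht' hyA hy
    refine ⟨x, hxA, ⟨hx.1, hx.2.trans_le (inv_anti₀ (by positivity) hmj)⟩, ?_⟩
    calc |x - t| = |y - pierceT t| / j := hxt
      _ ≤ (((j : ℝ) + 1) * 2 ^ n)⁻¹ / j := by gcongr
      _ ≤ δ := by
        have hjj : (m : ℝ) * 2 ≤ ((j : ℝ) + 1) * j := by nlinarith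
        rw [div_eq_mul_inv, ← mul_inv, hδ_def, pow_succ]
        exact inv_anti₀ (by positivity) (by nlinarith [pow_pos (two_pos : (0 : ℝ) < 2) n])

theorem stmt2 (α : ℝ≥0∞) : Set.Icc (0 : ℝ) 1 ⊆ closure (pierceA α) := by
  intro t ht
  refine Metric.mem_closure_iff.2 fun ε hε => ?_
  obtain ⟨n, hn⟩ := exists_pow_lt_of_lt_one hε (by norm_num : (1 : ℝ) / 2 < 1)
  obtain ⟨x, hxA, -, hxt⟩ :=
    exists_mem_pierceA_abs_sub_le α n Nat.one_pos (t := t) (by simpa using ht)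
  refine ⟨x, hxA, ?_⟩
  rw [Real.dist_eq, abs_sub_comm]
  calc |x - t| ≤ (((1 : ℕ) : ℝ) * 2 ^ n)⁻¹ := hxt
    _ = (1 / 2) ^ n := by simp
    _ < ε := hn
end

section
/- For any non-empty open subset U of [0,1] (with its subspace topology from ℝ), there exist a positive integer n and a strictly increasing finite sequence σ = (σ₁,…,σ_n) of positive integers such that the fundamental interval I_σ is contained in U. -/
open Filter Set Topology MeasureTheory
open scoped ENNReal NNReal

/-! Two points of `[0, 1]` with the same first Pierce digit `m ≥ 1` satisfy
`T x - T y = m (y - x)`, so `T` does not contract distances within a cylinder, while the points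
with first digit `m` lie in `(0, 1 / m]`. Hence every fundamental interval of length `n + 1` has
diameter at most `1 / σ (n + 1)`. The orbit of an irrational `x ∈ (0, 1)` never hits `0` and its
digits strictly increase, so `d_{n+1}(x) ≥ n + 1` and the fundamental intervals around `x` shrink
to `x`. Irrational points are dense, so one of them lies in `U` together with a whole cylinder. -/

section Floor

variable {x : ℝ}

lemma one_le_floor_one_div (hx0 : 0 < x) (hx1 : x ≤ 1) : 1 ≤ ⌊1 / x⌋₊ :=
  Nat.le_floor <| by rw [Nat.cast_one, le_div_iff₀ hx0]; linarith

lemma floor_one_div_mul_le_one (hx : 0 < x) : (⌊1 / x⌋₊ : ℝ) * x ≤ 1 :=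
  (le_div_iff₀ hx).1 (Nat.floor_le (by positivity))

lemma one_lt_floor_one_div_add_one_mul (hx : 0 < x) : 1 < ((⌊1 / x⌋₊ : ℝ) + 1) * x :=
  (div_lt_iff₀ hx).1 (Nat.lt_floor_add_one _)

end Floor

section PierceT

variable {x : ℝ}

lemma pierceT_of_ne_zero (hx : x ≠ 0) : pierceT x = 1 - (⌊1 / x⌋₊ : ℝ) * x := if_neg hx

lemma pierceT_nonneg (hx : 0 ≤ x) : 0 ≤ pierceT x := by
  rcases hx.eq_or_lt with rfl | hx
  · simp [pierceT]
  · rw [pierceT_of_ne_zero hx.ne']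
    linarith [floor_one_div_mul_le_one hx]

lemma pierceT_lt_self (hx : 0 < x) : pierceT x < x := by
  rw [pierceT_of_ne_zero hx.ne']
  linarith [one_lt_floor_one_div_add_one_mul hx]

lemma mapsTo_pierceT_Icc : MapsTo pierceT (Icc 0 1) (Icc 0 1) := by
  rintro x ⟨hx0, hx1⟩
  rcases hx0.eq_or_lt with rfl | hx0
  · simp [pierceT]
  · exact ⟨pierceT_nonneg hx0.le, (pierceT_lt_self hx0).le.trans hx1⟩

lemma pierceT_lt_one_div_floor_one_div_add_one (hx0 : 0 < x) (hx1 : x ≤ 1) :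
    pierceT x < 1 / ((⌊1 / x⌋₊ : ℝ) + 1) := by
  have hm : (1 : ℝ) ≤ ⌊1 / x⌋₊ := by exact_mod_cast one_le_floor_one_div hx0 hx1
  have hmx := one_lt_floor_one_div_add_one_mul hx0
  rw [pierceT_of_ne_zero hx0.ne', lt_div_iff₀ (by positivity)]
  nlinarith

lemma floor_one_div_lt_floor_one_div_pierceT (hx0 : 0 < x) (hx1 : x ≤ 1) (hT : 0 < pierceT x) :
    ⌊1 / x⌋₊ < ⌊1 / pierceT x⌋₊ := by
  have h := pierceT_lt_one_div_floor_one_div_add_one hx0 hx1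
  rw [lt_div_iff₀ (by positivity), mul_comm, ← lt_div_iff₀ hT] at h
  exact Nat.lt_of_succ_le (Nat.le_floor (by exact_mod_cast h.le))

lemma Irrational.pierceT (hx : Irrational x) (hx0 : 0 < x) (hx1 : x ≤ 1) :
    Irrational (pierceT x) := by
  rw [pierceT_of_ne_zero hx0.ne']
  have hm := Nat.one_le_iff_ne_zero.1 (one_le_floor_one_div hx0 hx1)
  simpa using (hx.natCast_mul hm).natCast_sub 1

lemma mapsTo_pierceT_irrational_Ioo :
    MapsTo pierceT ({x | Irrational x} ∩ Ioo 0 1) ({x | Irrational x} ∩ Ioo 0 1) := by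
  rintro x ⟨hirr, hx0, hx1⟩
  have hT := hirr.pierceT hx0 hx1.le
  exact ⟨hT, (pierceT_nonneg hx0.le).lt_of_ne' hT.ne_zero, (pierceT_lt_self hx0).trans hx1⟩

lemma strictMono_floor_one_div_iterate_pierceT (hx : x ∈ {x | Irrational x} ∩ Ioo 0 1) :
    StrictMono fun k => ⌊1 / pierceT^[k] x⌋₊ := by
  refine strictMono_nat_of_lt_succ fun k => ?_
  obtain ⟨-, hk0, hk1⟩ := mapsTo_pierceT_irrational_Ioo.iterate k hx
  obtain ⟨-, hT0, -⟩ := mapsTo_pierceT_irrational_Ioo.iterate (k + 1) hx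
  rw [Function.iterate_succ_apply'] at hT0 ⊢
  exact floor_one_div_lt_floor_one_div_pierceT hk0 hk1.le hT0

lemma add_one_le_floor_one_div_iterate_pierceT (hx : x ∈ {x | Irrational x} ∩ Ioo 0 1) (k : ℕ) :
    k + 1 ≤ ⌊1 / pierceT^[k] x⌋₊ := by
  have h0 := one_le_floor_one_div hx.2.1 hx.2.2.le
  have hk := (strictMono_floor_one_div_iterate_pierceT hx).add_le_nat k 0
  simp only [add_zero, Function.iterate_zero, id_eq] at hk
  omega

end PierceT

section Digits

variable {x y : ℝ}

lemma pierceD1_eq_natCast_iff {m : ℕ} : pierceD1 x = m ↔ x ≠ 0 ∧ ⌊1 / x⌋₊ = m := by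
  by_cases hx : x = 0 <;> simp [pierceD1, hx]

lemma pierceD1_eq_top_iff : pierceD1 x = ⊤ ↔ x = 0 := by
  by_cases hx : x = 0 <;> simp [pierceD1, hx]

lemma abs_sub_le_abs_pierceT_sub (hx : x ∈ Icc 0 1) (hy : 0 ≤ y) (h : pierceD1 x = pierceD1 y) :
    |x - y| ≤ |pierceT x - pierceT y| := by
  rcases eq_or_ne x 0 with rfl | hx0
  · obtain rfl : y = 0 := pierceD1_eq_top_iff.1 (h ▸ pierceD1_eq_top_iff.2 rfl)
    simp
  obtain ⟨hy0, hm⟩ :=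
    pierceD1_eq_natCast_iff.1 (h.symm.trans (pierceD1_eq_natCast_iff.2 ⟨hx0, rfl⟩))
  have hm1 : (1 : ℝ) ≤ ⌊1 / x⌋₊ := by
    exact_mod_cast one_le_floor_one_div (hx.1.lt_of_ne' hx0) hx.2
  have hdiff : pierceT x - pierceT y = ⌊1 / x⌋₊ * (y - x) := by
    rw [pierceT_of_ne_zero hx0, pierceT_of_ne_zero hy0, hm]
    ring
  rw [hdiff, abs_mul, Nat.abs_cast, abs_sub_comm y x]
  exact le_mul_of_one_le_left (abs_nonneg _) hm1

lemma abs_sub_le_abs_iterate_pierceT_sub (n : ℕ) (hx : x ∈ Icc 0 1) (hy : y ∈ Icc 0 1)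
    (h : ∀ k < n, pierceD1 (pierceT^[k] x) = pierceD1 (pierceT^[k] y)) :
    |x - y| ≤ |pierceT^[n] x - pierceT^[n] y| := by
  induction n generalizing x y with
  | zero => simp
  | succ n ih =>
    calc |x - y| ≤ |pierceT x - pierceT y| := abs_sub_le_abs_pierceT_sub hx hy.1 (h 0 n.succ_pos)
      _ ≤ _ := ih (mapsTo_pierceT_Icc hx) (mapsTo_pierceT_Icc hy) fun k hk => by
        simpa only [← Function.iterate_succ_apply] using h (k + 1) (by omega)

lemma abs_sub_le_one_div_of_pierceD1_eq {m : ℕ} (hx : x ∈ Icc 0 1) (hy : 0 ≤ y)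
    (hxm : pierceD1 x = m) (hym : pierceD1 y = m) : |x - y| ≤ 1 / m := by
  obtain ⟨hx0, rfl⟩ := pierceD1_eq_natCast_iff.1 hxm
  obtain ⟨hy0, hm⟩ := pierceD1_eq_natCast_iff.1 hym
  have hxpos := hx.1.lt_of_ne' hx0
  have hm1 : (0 : ℝ) < ⌊1 / x⌋₊ := by exact_mod_cast one_le_floor_one_div hxpos hx.2
  refine abs_sub_le_of_nonneg_of_le hx.1 ?_ hy ?_ <;> rw [le_div_iff₀ hm1, mul_comm]
  · exact floor_one_div_mul_le_one hxpos
  · exact hm ▸ floor_one_div_mul_le_one (hy.lt_of_ne' hy0)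

lemma abs_sub_le_of_mem_fundI {n : ℕ} {σ : ℕ → ℕ} (hx : x ∈ fundI (n + 1) σ)
    (hy : y ∈ fundI (n + 1) σ) : |x - y| ≤ 1 / σ (n + 1) := by
  have hdigit : ∀ k < n + 1, pierceD1 (pierceT^[k] x) = σ (k + 1) ∧
      pierceD1 (pierceT^[k] y) = σ (k + 1) := fun k hk =>
    ⟨hx.2 (k + 1) k.succ_pos hk, hy.2 (k + 1) k.succ_pos hk⟩
  calc |x - y| ≤ |pierceT^[n] x - pierceT^[n] y| :=
        abs_sub_le_abs_iterate_pierceT_sub n hx.1 hy.1 fun k hk =>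
          (hdigit k (by omega)).1.trans (hdigit k (by omega)).2.symm
    _ ≤ 1 / σ (n + 1) :=
        abs_sub_le_one_div_of_pierceD1_eq (mapsTo_pierceT_Icc.iterate n hx.1)
          (mapsTo_pierceT_Icc.iterate n hy.1).1 (hdigit n n.lt_succ_self).1
          (hdigit n n.lt_succ_self).2

lemma mem_fundI_of_irrational (n : ℕ) (hx : x ∈ {x | Irrational x} ∩ Ioo 0 1) :
    x ∈ fundI n fun k => ⌊1 / pierceT^[k - 1] x⌋₊ := by
  refine ⟨Ioo_subset_Icc_self hx.2, fun k hk _ => ?_⟩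
  obtain ⟨j, rfl⟩ := Nat.exists_eq_add_of_le' hk
  exact pierceD1_eq_natCast_iff.2 ⟨(mapsTo_pierceT_irrational_Ioo.iterate j hx).2.1.ne', rfl⟩

end Digits

theorem stmt9 (U : Set ℝ) (hU : U.Nonempty)
    (hopen : ∃ V : Set ℝ, IsOpen V ∧ U = V ∩ Set.Icc 0 1) :
    ∃ (n : ℕ) (σ : ℕ → ℕ), 1 ≤ n ∧
      (∀ k, 1 ≤ k → k ≤ n → 0 < σ k) ∧
      (∀ k, 1 ≤ k → k + 1 ≤ n → σ k < σ (k + 1)) ∧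
      fundI n σ ⊆ U := by
  obtain ⟨V, hV, rfl⟩ := hopen
  have hVIoo : (V ∩ Ioo 0 1).Nonempty := by
    rw [inter_comm, ← closure_inter_open_nonempty_iff hV, closure_Ioo zero_ne_one, inter_comm]
    exact hU
  obtain ⟨x, ⟨hxV, hxIoo⟩, hxirr⟩ :=
    dense_irrational.inter_open_nonempty _ (hV.inter isOpen_Ioo) hVIoo
  have hx : x ∈ {x | Irrational x} ∩ Ioo 0 1 := ⟨hxirr, hxIoo⟩
  obtain ⟨δ, hδ, hball⟩ := Metric.isOpen_iff.1 hV x hxV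
  obtain ⟨n, hn⟩ := exists_nat_one_div_lt hδ
  have hge := add_one_le_floor_one_div_iterate_pierceT hx
  refine ⟨n + 1, fun k => ⌊1 / pierceT^[k - 1] x⌋₊, n.succ_pos,
    fun k _ _ => (k - 1).succ_pos.trans_le (hge _), fun k hk _ => ?_, fun y hy => ⟨hball ?_, hy.1⟩⟩
  · obtain ⟨j, rfl⟩ := Nat.exists_eq_add_of_le' hk
    exact strictMono_floor_one_div_iterate_pierceT hx j.lt_succ_self
  · rw [Metric.mem_ball, Real.dist_eq, abs_sub_comm]
    calc |x - y| ≤ 1 / ⌊1 / pierceT^[n] x⌋₊ :=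
          abs_sub_le_of_mem_fundI (mem_fundI_of_irrational _ hx) hy
      _ ≤ 1 / ((n : ℝ) + 1) :=
          one_div_le_one_div_of_le (by positivity) (by exact_mod_cast hge n)
      _ < δ := hn
end
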